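/- arXiv:math/0301083 — 3 statements merged into one kernel-verified Lean document; each statement's English description precedes it below -/
import Mathlib

section
/- In particular, for a twisting cochain u = Σ x_π ⊗ γ_π as above, each γ_i (i ∈ [r]) is a cocycle, and for i < j one has dγ_{ij} = γ_j ∪ γ_i − γ_i ∪ γ_j. Consequently, on the homology H(M) of any right C-comodule M, the operators [m] ↦ [γ_i ∩ m] are well defined and pairwise commute, giving H(M) the structure of a module over the polynomial ring R[ξ_1,…,ξ_r]. -/
/-!
STATEMENT 5.  For a twisting cochain `u = Σ x_π ⊗ γ_π` (i.e. a weak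
`S`-comodule `(C, M, u)`), each `γ_i` is a cocycle and
`dγ_{ij} = γ_j ∪ γ_i - γ_i ∪ γ_j` for `i < j`.  Consequently the operators
`[m] ↦ [γ_i ∩ m]` on the homology `H(M)` of a right `C`-comodule `M` are well
defined and pairwise commute, giving `H(M)` the structure of a module over the
polynomial ring `R[ξ_1, …, ξ_r]`.

Encoding: as in Statement 4, degrees are handled by parity operators `e`; the
cap product is `γ ∩ m = (1 ⊗ γ) Δ_M(m)` (no Koszul sign here since `γ_i` has
even degree `2`); twisting cochain condition is taken in the component form
`dγ_π = -Σ_{(μ,ν)⊢π, μ≠∅≠ν} (-1)^{|μ|} sgn(ν,μ) γ_μ ∪ γ_ν`.  The homology-level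
claims are stated element-wise on cycles and boundaries: the operators are
chain maps, descend to homology, square-commute up to boundary, which is
exactly the asserted `R[ξ_1,…,ξ_r] = S^*`-module structure on `H(M)`.
-/

open TensorProduct

noncomputable section

structure DGStr (R : Type) [CommRing R] (M : Type) [AddCommGroup M] [Module R M] :
    Type where
  d : M →ₗ[R] M
  e : M →ₗ[R] M
  d_d : d ∘ₗ d = 0
  e_e : e ∘ₗ e = LinearMap.id
  e_d : e ∘ₗ d = - (d ∘ₗ e)

variable {R C M : Type} [CommRing R] [AddCommGroup C] [Module R C]
  [AddCommGroup M] [Module R M]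

def pm {W : Type} [AddCommGroup W] [Module R W] (e : W →ₗ[R] W) : Bool → (W →ₗ[R] W)
  | false => LinearMap.id
  | true => e

def dcoch (dgC : DGStr R C) (γ : C →ₗ[R] R) : C →ₗ[R] R :=
  -(γ ∘ₗ dgC.e ∘ₗ dgC.d)

def cupco (dgC : DGStr R C) (Δ : C →ₗ[R] C ⊗[R] C)
    (f g : C →ₗ[R] R) (pg : Bool) : C →ₗ[R] R :=
  LinearMap.mul' R R ∘ₗ map f g ∘ₗ map (pm dgC.e pg) LinearMap.id ∘ₗ Δ

def sgnShuffle {r : ℕ} (ν μ : Finset (Fin r)) : ℤ :=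
  (-1) ^ (∑ a ∈ ν, (μ.filter (fun b => b < a)).card)

/-- The cap product `γ ∩ m = (1 ⊗ γ) Δ_M(m)`, for `γ` of even degree
(no Koszul sign). -/
def capCo (ΔM : M →ₗ[R] M ⊗[R] C) (γ : C →ₗ[R] R) : M →ₗ[R] M :=
  (TensorProduct.rid R M).toLinearMap ∘ₗ map LinearMap.id γ ∘ₗ ΔM

/-!
For `π = {i}` the twisting cochain equation has no admissible splitting `μ ⊔ ν = π`, so
`dγ_i = 0`; for `π = {i, j}` exactly the splittings `μ = {i}` and `μ = {j}` contribute.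
On the comodule side, the cap product satisfies the Leibniz rule
`g ∩ dm = d(g ∩ m) + e(dg ∩ m)` and, by coassociativity, `f ∩ (g ∩ m) = (f ∪ g) ∩ m`.
Hence capping with a cocycle is a chain map, capping a cycle with a coboundary gives a
boundary, and `[γ_i ∩ ·, γ_j ∩ ·] = (γ_i ∪ γ_j - γ_j ∪ γ_i) ∩ · = -(dγ_{ij}) ∩ ·`
vanishes on homology.
-/

theorem Finset.powerset_singleton {α : Type*} [DecidableEq α] (a : α) :
    ({a} : Finset α).powerset = {∅, {a}} := by
  ext; simp [Finset.subset_singleton_iff]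

section TwistingCochain

variable {r : ℕ} (dgC : DGStr R C) (Δ : C →ₗ[R] C ⊗[R] C) (γ : Finset (Fin r) → (C →ₗ[R] R))

def twistingCupSum (π : Finset (Fin r)) : C →ₗ[R] R :=
  -∑ μ ∈ π.powerset,
    if μ ≠ ∅ ∧ μ ≠ π then
      (((-1 : R) ^ μ.card) * ((sgnShuffle (π \ μ) μ : ℤ) : R)) •
        cupco dgC Δ (γ μ) (γ (π \ μ)) (Nat.bodd ((π \ μ).card + 1))
    else 0

theorem twistingCupSum_singleton (i : Fin r) :
    twistingCupSum dgC Δ γ {i} = 0 := by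
  simp [twistingCupSum, Finset.powerset_singleton]

theorem twistingCupSum_pair {i j : Fin r} (hij : i < j) :
    twistingCupSum dgC Δ γ {i, j}
      = cupco dgC Δ (γ {j}) (γ {i}) false - cupco dgC Δ (γ {i}) (γ {j}) false := by
  have hji : j ∉ ({i} : Finset (Fin r)) := by simpa using hij.ne'
  have hi : ({i} : Finset (Fin r)) ≠ {j, i} := fun h => hji (h ▸ Finset.mem_insert_self j {i})
  have hj : ({j} : Finset (Fin r)) ≠ {j, i} := fun h =>
    hij.ne (Finset.mem_singleton.mp (h ▸ Finset.mem_insert_of_mem (Finset.mem_singleton_self i)))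
  have hdiff : ({i} : Finset (Fin r)) \ {j} = {i} := by
    rw [Finset.sdiff_singleton_eq_erase, Finset.erase_eq_of_notMem hji]
  rw [twistingCupSum, Finset.pair_comm, Finset.sum_powerset_insert hji]
  simp [Finset.powerset_singleton, sgnShuffle, Finset.filter_singleton, hij, hij.ne',
    not_lt.mpr hij.le, hi, hj, hdiff]
  module

end TwistingCochain

section CapProduct

variable (dgC : DGStr R C) (dgM : DGStr R M) (ΔM : M →ₗ[R] M ⊗[R] C)

theorem capCo_sub (f g : C →ₗ[R] R) :
    capCo ΔM (f - g) = capCo ΔM f - capCo ΔM g := by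
  change _ ∘ₗ (f - g).lTensor M ∘ₗ ΔM = _ ∘ₗ f.lTensor M ∘ₗ ΔM - _ ∘ₗ g.lTensor M ∘ₗ ΔM
  rw [LinearMap.lTensor_sub, LinearMap.sub_comp, LinearMap.comp_sub]

theorem capCo_zero : capCo ΔM (0 : C →ₗ[R] R) = 0 := by
  simpa using capCo_sub ΔM 0 0

theorem comp_d_eq_zero_of_dcoch_eq_zero {γ : C →ₗ[R] R} (hγ : dcoch dgC γ = 0) :
    γ ∘ₗ dgC.d = 0 :=
  calc γ ∘ₗ dgC.d = (γ ∘ₗ dgC.d ∘ₗ dgC.e) ∘ₗ dgC.e := by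
        rw [LinearMap.comp_assoc, LinearMap.comp_assoc, dgC.e_e, LinearMap.comp_id]
    _ = dcoch dgC γ ∘ₗ dgC.e := by
        rw [dcoch, dgC.e_d, LinearMap.comp_neg, neg_neg]
    _ = 0 := by rw [hγ, LinearMap.zero_comp]

variable {dgC dgM ΔM}

theorem capCo_comp_d
    (hΔM_d : ΔM ∘ₗ dgM.d = (map dgM.d LinearMap.id + map dgM.e dgC.d) ∘ₗ ΔM)
    (g : C →ₗ[R] R) :
    capCo ΔM g ∘ₗ dgM.d = dgM.d ∘ₗ capCo ΔM g + dgM.e ∘ₗ capCo ΔM (g ∘ₗ dgC.d) := by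
  have leibniz : (TensorProduct.rid R M).toLinearMap ∘ₗ map LinearMap.id g ∘ₗ
      (map dgM.d LinearMap.id + map dgM.e dgC.d)
      = dgM.d ∘ₗ (TensorProduct.rid R M).toLinearMap ∘ₗ map LinearMap.id g
        + dgM.e ∘ₗ (TensorProduct.rid R M).toLinearMap ∘ₗ map LinearMap.id (g ∘ₗ dgC.d) := by
    ext x c
    simp
  ext m
  simpa [capCo, ← LinearMap.comp_apply ΔM dgM.d, hΔM_d] using LinearMap.congr_fun leibniz (ΔM m)

theorem capCo_comp_d_of_comp_d_eq_zero
    (hΔM_d : ΔM ∘ₗ dgM.d = (map dgM.d LinearMap.id + map dgM.e dgC.d) ∘ₗ ΔM)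
    {g : C →ₗ[R] R} (hg : g ∘ₗ dgC.d = 0) :
    capCo ΔM g ∘ₗ dgM.d = dgM.d ∘ₗ capCo ΔM g := by
  rw [capCo_comp_d hΔM_d, hg, capCo_zero, LinearMap.comp_zero, add_zero]

theorem capCo_comp_e_comp_d_apply_of_d_eq_zero
    (hΔM_d : ΔM ∘ₗ dgM.d = (map dgM.d LinearMap.id + map dgM.e dgC.d) ∘ₗ ΔM)
    (γ : C →ₗ[R] R) {m : M} (hm : dgM.d m = 0) :
    capCo ΔM (γ ∘ₗ dgC.e ∘ₗ dgC.d) m = dgM.d (dgM.e (capCo ΔM (γ ∘ₗ dgC.e) m)) := by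
  have h := LinearMap.congr_fun (capCo_comp_d hΔM_d (γ ∘ₗ dgC.e)) m
  simp only [LinearMap.comp_apply, LinearMap.add_apply, hm, map_zero,
    LinearMap.comp_assoc] at h
  calc capCo ΔM (γ ∘ₗ dgC.e ∘ₗ dgC.d) m
      = dgM.e (dgM.e (capCo ΔM (γ ∘ₗ dgC.e ∘ₗ dgC.d) m)) :=
        (LinearMap.congr_fun dgM.e_e _).symm
    _ = dgM.e (-dgM.d (capCo ΔM (γ ∘ₗ dgC.e) m)) := by
        rw [eq_neg_of_add_eq_zero_right h.symm]
    _ = dgM.d (dgM.e (capCo ΔM (γ ∘ₗ dgC.e) m)) := by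
        rw [map_neg, ← LinearMap.comp_apply dgM.e, dgM.e_d, LinearMap.neg_apply, neg_neg,
          LinearMap.comp_apply]

theorem capCo_comp_capCo (Δ : C →ₗ[R] C ⊗[R] C)
    (hΔM_coassoc : map ΔM LinearMap.id ∘ₗ ΔM
      = (TensorProduct.assoc R M C C).symm.toLinearMap ∘ₗ map LinearMap.id Δ ∘ₗ ΔM)
    (f g : C →ₗ[R] R) :
    capCo ΔM f ∘ₗ capCo ΔM g = capCo ΔM (cupco dgC Δ f g false) := by
  set ρ : M ⊗[R] R →ₗ[R] M := (TensorProduct.rid R M).toLinearMap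
  have capCo_rid : capCo ΔM f ∘ₗ ρ ∘ₗ map LinearMap.id g
      = ρ ∘ₗ map (ρ ∘ₗ map LinearMap.id f) g ∘ₗ map ΔM LinearMap.id := by
    ext x c
    simp [ρ, capCo]
  have cup_rid : ρ ∘ₗ map (ρ ∘ₗ map LinearMap.id f) g ∘ₗ
      (TensorProduct.assoc R M C C).symm.toLinearMap ∘ₗ map LinearMap.id Δ
      = ρ ∘ₗ map LinearMap.id (cupco dgC Δ f g false) := by
    ext x c
    simp only [ρ, LinearMap.comp_apply, map_tmul, LinearMap.id_apply, cupco, pm,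
      LinearEquiv.coe_coe, TensorProduct.AlgebraTensorModule.curry_apply,
      TensorProduct.curry_apply, LinearMap.coe_restrictScalars]
    induction Δ c using TensorProduct.induction_on with
    | zero => simp
    | tmul c₁ c₂ => simp [TensorProduct.assoc_symm_tmul, smul_smul, mul_comm]
    | add u v hu hv => simp only [TensorProduct.tmul_add, map_add, hu, hv]
  ext m
  calc capCo ΔM f (capCo ΔM g m)
      = (ρ ∘ₗ map (ρ ∘ₗ map LinearMap.id f) g ∘ₗ map ΔM LinearMap.id ∘ₗ ΔM) m :=
        LinearMap.congr_fun capCo_rid (ΔM m)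
    _ = capCo ΔM (cupco dgC Δ f g false) m := by
        rw [hΔM_coassoc]
        exact LinearMap.congr_fun cup_rid (ΔM m)

theorem capCo_commutator_apply_of_dcoch_eq (Δ : C →ₗ[R] C ⊗[R] C)
    (hΔM_coassoc : map ΔM LinearMap.id ∘ₗ ΔM
      = (TensorProduct.assoc R M C C).symm.toLinearMap ∘ₗ map LinearMap.id Δ ∘ₗ ΔM)
    (hΔM_d : ΔM ∘ₗ dgM.d = (map dgM.d LinearMap.id + map dgM.e dgC.d) ∘ₗ ΔM)
    {f g η : C →ₗ[R] R} (hη : dcoch dgC η = cupco dgC Δ g f false - cupco dgC Δ f g false)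
    {m : M} (hm : dgM.d m = 0) :
    capCo ΔM f (capCo ΔM g m) - capCo ΔM g (capCo ΔM f m)
      = dgM.d (dgM.e (capCo ΔM (η ∘ₗ dgC.e) m)) := by
  have hcup : cupco dgC Δ f g false - cupco dgC Δ g f false = η ∘ₗ dgC.e ∘ₗ dgC.d := by
    rw [← neg_sub, ← hη, dcoch, neg_neg]
  rw [← LinearMap.comp_apply (capCo ΔM f), ← LinearMap.comp_apply (capCo ΔM g),
    capCo_comp_capCo (dgC := dgC) Δ hΔM_coassoc, capCo_comp_capCo (dgC := dgC) Δ hΔM_coassoc,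
    ← LinearMap.sub_apply, ← capCo_sub, hcup]
  exact capCo_comp_e_comp_d_apply_of_d_eq_zero hΔM_d η hm

end CapProduct

theorem weak_comodule_homology_polynomial_action_general (r : ℕ)
    (dgC : DGStr R C) (Δ : C →ₗ[R] C ⊗[R] C)
    (γ : Finset (Fin r) → (C →ₗ[R] R))
    -- `u = Σ x_π ⊗ γ_π` is a twisting cochain, in component form:
    (htw : ∀ π : Finset (Fin r), π ≠ ∅ →
      dcoch dgC (γ π)
        = -∑ μ ∈ π.powerset,
            if μ ≠ ∅ ∧ μ ≠ π then
              (((-1 : R) ^ μ.card) * ((sgnShuffle (π \ μ) μ : ℤ) : R)) •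
                cupco dgC Δ (γ μ) (γ (π \ μ)) (Nat.bodd ((π \ μ).card + 1))
            else 0)
    -- `M` is a right `C`-comodule:
    (dgM : DGStr R M) (ΔM : M →ₗ[R] M ⊗[R] C)
    (hΔM_coassoc : map ΔM LinearMap.id ∘ₗ ΔM
      = (TensorProduct.assoc R M C C).symm.toLinearMap ∘ₗ map LinearMap.id Δ ∘ₗ ΔM)
    (hΔM_d : ΔM ∘ₗ dgM.d = (map dgM.d LinearMap.id + map dgM.e dgC.d) ∘ₗ ΔM) :
    -- (1) each `γ_i` is a cocycle:
    (∀ i : Fin r, dcoch dgC (γ {i}) = 0) ∧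
    -- (2) for `i < j`:  `dγ_{ij} = γ_j ∪ γ_i - γ_i ∪ γ_j`
    --     (both factors of degree 2, hence even parity):
    (∀ i j : Fin r, i < j →
      dcoch dgC (γ {i, j})
        = cupco dgC Δ (γ {j}) (γ {i}) false - cupco dgC Δ (γ {i}) (γ {j}) false) ∧
    -- (3) `γ_i ∩ ·` is a chain map, so `ξ_i · [m] = [γ_i ∩ m]` is well defined:
    (∀ i : Fin r, capCo ΔM (γ {i}) ∘ₗ dgM.d = dgM.d ∘ₗ capCo ΔM (γ {i})) ∧
    -- (4) well-definedness on homology classes: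
    (∀ (i : Fin r) (m m' h : M), dgM.d m = 0 → dgM.d m' = 0 →
      m - m' = dgM.d h →
      ∃ h' : M, capCo ΔM (γ {i}) m - capCo ΔM (γ {i}) m' = dgM.d h') ∧
    -- (5) the operators pairwise commute on homology, giving the
    --     `R[ξ_1,…,ξ_r]`-module structure:
    (∀ (i j : Fin r) (m : M), dgM.d m = 0 →
      ∃ h : M, capCo ΔM (γ {i}) (capCo ΔM (γ {j}) m)
        - capCo ΔM (γ {j}) (capCo ΔM (γ {i}) m) = dgM.d h) := by
  have cocycle (i : Fin r) : dcoch dgC (γ {i}) = 0 :=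
    (htw {i} (Finset.singleton_ne_empty i)).trans (twistingCupSum_singleton dgC Δ γ i)
  have pair (i j : Fin r) (hij : i < j) : dcoch dgC (γ {i, j})
      = cupco dgC Δ (γ {j}) (γ {i}) false - cupco dgC Δ (γ {i}) (γ {j}) false :=
    (htw {i, j} (Finset.insert_ne_empty i {j})).trans (twistingCupSum_pair dgC Δ γ hij)
  have chain (i : Fin r) : capCo ΔM (γ {i}) ∘ₗ dgM.d = dgM.d ∘ₗ capCo ΔM (γ {i}) :=
    capCo_comp_d_of_comp_d_eq_zero hΔM_d (comp_d_eq_zero_of_dcoch_eq_zero dgC (cocycle i))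
  have commute_of_lt {i j : Fin r} (hij : i < j) {m : M} (hm : dgM.d m = 0) :
      ∃ h : M, capCo ΔM (γ {i}) (capCo ΔM (γ {j}) m)
        - capCo ΔM (γ {j}) (capCo ΔM (γ {i}) m) = dgM.d h :=
    ⟨_, capCo_commutator_apply_of_dcoch_eq Δ hΔM_coassoc hΔM_d (pair i j hij) hm⟩
  refine ⟨cocycle, pair, chain, fun i m m' h _ _ hmm' => ⟨capCo ΔM (γ {i}) h, ?_⟩, ?_⟩
  · rw [← map_sub, hmm', ← LinearMap.comp_apply, chain, LinearMap.comp_apply]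
  · intro i j m hm
    rcases lt_trichotomy i j with hij | rfl | hji
    · exact commute_of_lt hij hm
    · exact ⟨0, by rw [sub_self, map_zero]⟩
    · obtain ⟨h, hh⟩ := commute_of_lt hji hm
      exact ⟨-h, by rw [map_neg, ← hh, neg_sub]⟩

theorem weak_comodule_homology_polynomial_action (r : ℕ)
    (dgC : DGStr R C) (Δ : C →ₗ[R] C ⊗[R] C)
    (γ : Finset (Fin r) → (C →ₗ[R] R))
    -- `γ_π` has degree `|π| + 1`:
    (hpar : ∀ π : Finset (Fin r), π ≠ ∅ →
      (γ π) ∘ₗ dgC.e = ((-1 : R) ^ (π.card + 1)) • γ π)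
    -- `u = Σ x_π ⊗ γ_π` is a twisting cochain, in component form:
    (htw : ∀ π : Finset (Fin r), π ≠ ∅ →
      dcoch dgC (γ π)
        = -∑ μ ∈ π.powerset,
            if μ ≠ ∅ ∧ μ ≠ π then
              (((-1 : R) ^ μ.card) * ((sgnShuffle (π \ μ) μ : ℤ) : R)) •
                cupco dgC Δ (γ μ) (γ (π \ μ)) (Nat.bodd ((π \ μ).card + 1))
            else 0)
    -- `M` is a right `C`-comodule:
    (dgM : DGStr R M) (ΔM : M →ₗ[R] M ⊗[R] C)
    (hΔM_coassoc : map ΔM LinearMap.id ∘ₗ ΔM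
      = (TensorProduct.assoc R M C C).symm.toLinearMap ∘ₗ map LinearMap.id Δ ∘ₗ ΔM)
    (hΔM_d : ΔM ∘ₗ dgM.d = (map dgM.d LinearMap.id + map dgM.e dgC.d) ∘ₗ ΔM)
    (hΔM_e : ΔM ∘ₗ dgM.e = map dgM.e dgC.e ∘ₗ ΔM) :
    -- (1) each `γ_i` is a cocycle:
    (∀ i : Fin r, dcoch dgC (γ {i}) = 0) ∧
    -- (2) for `i < j`:  `dγ_{ij} = γ_j ∪ γ_i - γ_i ∪ γ_j`
    --     (both factors of degree 2, hence even parity):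
    (∀ i j : Fin r, i < j →
      dcoch dgC (γ {i, j})
        = cupco dgC Δ (γ {j}) (γ {i}) false - cupco dgC Δ (γ {i}) (γ {j}) false) ∧
    -- (3) `γ_i ∩ ·` is a chain map, so `ξ_i · [m] = [γ_i ∩ m]` is well defined:
    (∀ i : Fin r, capCo ΔM (γ {i}) ∘ₗ dgM.d = dgM.d ∘ₗ capCo ΔM (γ {i})) ∧
    -- (4) well-definedness on homology classes:
    (∀ (i : Fin r) (m m' h : M), dgM.d m = 0 → dgM.d m' = 0 →
      m - m' = dgM.d h →
      ∃ h' : M, capCo ΔM (γ {i}) m - capCo ΔM (γ {i}) m' = dgM.d h') ∧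
    -- (5) the operators pairwise commute on homology, giving the
    --     `R[ξ_1,…,ξ_r]`-module structure:
    (∀ (i j : Fin r) (m : M), dgM.d m = 0 →
      ∃ h : M, capCo ΔM (γ {i}) (capCo ΔM (γ {j}) m)
        - capCo ΔM (γ {j}) (capCo ΔM (γ {i}) m) = dgM.d h) :=
  weak_comodule_homology_polynomial_action_general r dgC Δ γ htw dgM ΔM hΔM_coassoc hΔM_d

end
end

section
/- Suppose C* is a dg algebra with a cup-one product ∪₁ that is a chain homotopy for commutativity (d(α∪₁β) = α∪β − (−1)^{|α||β|}β∪α − dα∪₁β − (−1)^{|α|}α∪₁dβ) and a left derivation of the cup product (α∪₁(β∪γ) = (α∪₁β)∪γ + (−1)^{|α||β|+|β|}β∪(α∪₁γ)). Given cocycles ξ'_1,…,ξ'_r of cohomological degree 2, define ξ'_π for |π| ≥ 2 recursively by ξ'_π = ξ'_{π⁺} ∪₁ ξ'_{π'}, where π⁺ = max π and π' = π∖{π⁺}. Then t = Σ_{∅≠π⊂[r]} x_π ⊗ ξ'_π is a twisting cochain, i.e. the relations dξ'_π = − Σ_{(μ,ν)⊢π, μ≠∅≠ν} (−1)^{|μ|}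 sgn(ν,μ) ξ'_μ ∪ ξ'_ν hold for all nonempty π. -/
/-!
STATEMENT 6 (Gugenheim–May).  Suppose the dg algebra `A` (thought of as `C^*`)
carries a cup-one product `∪₁` which is a chain homotopy for commutativity and
a left derivation of the (cup) product, vanishing when one factor has degree 0.
Given cocycles `ξ'_1, …, ξ'_r` of (cohomological) degree 2, define
`ξ'_π = ξ'_{π⁺} ∪₁ ξ'_{π'}` recursively (`π⁺ = max π`, `π' = π \ {π⁺}`).  Then
`t = Σ_{∅≠π} x_π ⊗ ξ'_π` is a twisting cochain, i.e.
`dξ'_π = - Σ_{(μ,ν)⊢π, μ≠∅≠ν} (-1)^{|μ|} sgn(ν,μ) ξ'_μ ∪ ξ'_ν` for all nonempty `π`.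

Degrees are encoded via the parity operator `e` (with `e a = ± a` expressing
that `a` is homogeneous of even/odd degree); the degree-0 part is encoded by a
submodule `G0` on which `∪₁` vanishes.
-/

noncomputable section

/-- `ξ'` on a (descending sorted) list: `ξ'_{[i]} = ξ_i` and
`ξ'_{i::t} = ξ_i ∪₁ ξ'_t`. -/
def xiList {A : Type} [Ring A] {r : ℕ} (cup1 : A → A → A) (ξ : Fin r → A) :
    List (Fin r) → A
  | [] => 0
  | [i] => ξ i
  | i :: t => cup1 (ξ i) (xiList cup1 ξ t)

/-- `ξ'_π`, defined by the recursion `ξ'_π = ξ'_{π⁺} ∪₁ ξ'_{π'}` where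
`π⁺ = max π` (the head of the descending sort) and `π' = π \ {π⁺}`. -/
def xiExt {A : Type} [Ring A] {r : ℕ} (cup1 : A → A → A) (ξ : Fin r → A)
    (π : Finset (Fin r)) : A :=
  xiList cup1 ξ ((π.sort (· ≤ ·)).reverse)

/-! Split off the largest element `m` of `π = insert m s`, so that `ξ'_π = ξ_m ∪₁ ξ'_s`.
As `ξ_m` is an even cocycle, the homotopy formula gives
`dξ'_π = ξ_m ξ'_s - ξ'_s ξ_m - ξ_m ∪₁ dξ'_s`, and by induction `dξ'_s` is minus the twisting
sum over `s`. The Hirsch formula turns `ξ_m ∪₁ (ξ'_μ ξ'_ν)` into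
`ξ'_{μ+m} ξ'_ν - (-1)^{|μ|} ξ'_μ ξ'_{ν+m}`: these are the terms of the twisting sum over `π`
where `m` lies in the first resp. second factor, while `ξ_m ξ'_s` and `ξ'_s ξ_m` are its two
terms with a singleton factor `{m}`. Since `m` is maximal, moving it into `μ` does not change the
shuffle sign and moving it into `ν` multiplies it by `(-1)^{|μ|}`. -/

lemma Finset.sort_insert_reverse_of_forall_lt {α : Type*} [LinearOrder α] {m : α} {s : Finset α}
    (hlt : ∀ b ∈ s, b < m) :
    ((insert m s).sort (· ≤ ·)).reverse = m :: (s.sort (· ≤ ·)).reverse := by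
  refine List.SortedGT.eq_of_mem_iff (Finset.sortedLT_sort _).reverse ?_ (by simp)
  refine List.Pairwise.sortedGT
    (List.pairwise_cons.2 ⟨by simpa using hlt, (Finset.sortedLT_sort s).reverse.pairwise⟩)

lemma xiExt_singleton {A : Type} [Ring A] {r : ℕ} (cup1 : A → A → A) (ξ : Fin r → A)
    (i : Fin r) : xiExt cup1 ξ {i} = ξ i := by
  simp [xiExt, xiList]

lemma xiExt_insert_of_forall_lt {A : Type} [Ring A] {r : ℕ} (cup1 : A → A → A)
    (ξ : Fin r → A) {m : Fin r} {s : Finset (Fin r)} (hlt : ∀ b ∈ s, b < m) (hs : s ≠ ∅) :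
    xiExt cup1 ξ (insert m s) = cup1 (ξ m) (xiExt cup1 ξ s) := by
  obtain ⟨i, t, ht⟩ := List.exists_cons_of_ne_nil (l := (s.sort (· ≤ ·)).reverse)
    (by simpa [← List.length_eq_zero_iff] using hs)
  rw [xiExt, xiExt, Finset.sort_insert_reverse_of_forall_lt hlt, ht]
  rfl

section Twisting

variable {r : ℕ} {m : Fin r} {s μ : Finset (Fin r)}

lemma sgnShuffle_insert_left (hlt : ∀ b ∈ μ, b < m) (ν : Finset (Fin r)) (hm : m ∉ ν) :
    sgnShuffle (insert m ν) μ = (-1) ^ μ.card * sgnShuffle ν μ := by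
  rw [sgnShuffle, Finset.sum_insert hm, pow_add, Finset.filter_true_of_mem hlt, sgnShuffle]

lemma sgnShuffle_insert_right {ν : Finset (Fin r)} (hlt : ∀ a ∈ ν, a < m) (μ : Finset (Fin r)) :
    sgnShuffle ν (insert m μ) = sgnShuffle ν μ := by
  unfold sgnShuffle
  refine congrArg _ (Finset.sum_congr rfl fun a ha => ?_)
  rw [Finset.filter_insert, if_neg (not_lt.2 (hlt a ha).le)]

def twistCoeff (π μ : Finset (Fin r)) : ℤ :=
  (-1) ^ μ.card * sgnShuffle (π \ μ) μ

lemma twistCoeff_insert_of_subset (hlt : ∀ b ∈ s, b < m) (hμ : μ ⊆ s) :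
    twistCoeff (insert m s) μ = (-1) ^ μ.card * twistCoeff s μ := by
  have hm : m ∉ s := fun h => lt_irrefl m (hlt m h)
  rw [twistCoeff, twistCoeff, Finset.insert_sdiff_of_notMem _ (fun h => hm (hμ h)),
    sgnShuffle_insert_left (fun b hb => hlt b (hμ hb)) _ (fun h => hm (Finset.sdiff_subset h))]

lemma twistCoeff_insert_insert (hlt : ∀ b ∈ s, b < m) (hμ : μ ⊆ s) :
    twistCoeff (insert m s) (insert m μ) = -twistCoeff s μ := by
  have hm : m ∉ s := fun h => lt_irrefl m (hlt m h)
  rw [twistCoeff, twistCoeff, Finset.insert_sdiff_insert, Finset.sdiff_insert_of_notMem hm,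
    Finset.card_insert_of_notMem (fun h => hm (hμ h)),
    sgnShuffle_insert_right (fun b hb => hlt b (Finset.sdiff_subset hb)), pow_succ]
  ring

lemma twistCoeff_empty (π : Finset (Fin r)) : twistCoeff π ∅ = 1 := by
  simp [twistCoeff, sgnShuffle]

lemma twistCoeff_self (π : Finset (Fin r)) : twistCoeff π π = (-1) ^ π.card := by
  simp [twistCoeff, sgnShuffle]

variable {A : Type} [Ring A]

def twistingTerm (X : Finset (Fin r) → A) (π μ : Finset (Fin r)) : A :=
  if μ ≠ ∅ ∧ μ ≠ π then twistCoeff π μ • (X μ * X (π \ μ)) else 0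

def twistingSum (X : Finset (Fin r) → A) (π : Finset (Fin r)) : A :=
  ∑ μ ∈ π.powerset, twistingTerm X π μ

lemma twistingSum_singleton (X : Finset (Fin r) → A) (i : Fin r) : twistingSum X {i} = 0 := by
  refine Finset.sum_eq_zero fun μ hμ => ?_
  rcases Finset.subset_singleton_iff.1 (Finset.mem_powerset.1 hμ) with rfl | rfl <;>
    simp [twistingTerm]

lemma twistingTerm_insert_of_subset (X : Finset (Fin r) → A) (hlt : ∀ b ∈ s, b < m)
    (hμ : μ ⊆ s) (hμ0 : μ ≠ ∅) :
    twistingTerm X (insert m s) μ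
      = ((-1) ^ μ.card * twistCoeff s μ) • (X μ * X (insert m (s \ μ))) := by
  have hm : m ∉ s := fun h => lt_irrefl m (hlt m h)
  have hμπ : μ ≠ insert m s := fun h => hm (hμ (h ▸ Finset.mem_insert_self m s))
  rw [twistingTerm, if_pos ⟨hμ0, hμπ⟩, twistCoeff_insert_of_subset hlt hμ,
    Finset.insert_sdiff_of_notMem _ (fun h => hm (hμ h))]

lemma twistingTerm_insert_insert (X : Finset (Fin r) → A) (hlt : ∀ b ∈ s, b < m)
    (hμ : μ ⊆ s) (hμs : μ ≠ s) :
    twistingTerm X (insert m s) (insert m μ) = -twistCoeff s μ • (X (insert m μ) * X (s \ μ)) := by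
  have hm : m ∉ s := fun h => lt_irrefl m (hlt m h)
  have hμπ : insert m μ ≠ insert m s := fun h => hμs <| by
    rw [← Finset.erase_insert (fun h => hm (hμ h)), h, Finset.erase_insert hm]
  rw [twistingTerm, if_pos ⟨Finset.insert_ne_empty m μ, hμπ⟩, twistCoeff_insert_insert hlt hμ,
    Finset.insert_sdiff_insert, Finset.sdiff_insert_of_notMem hm]

lemma twistingSum_insert_of_forall_lt (X : Finset (Fin r) → A) (D : A →+ A)
    (hlt : ∀ b ∈ s, b < m) (hs : s ≠ ∅)
    (hD : ∀ μ ν : Finset (Fin r), (∀ b ∈ μ, b < m) → (∀ b ∈ ν, b < m) → μ ≠ ∅ → ν ≠ ∅ →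
      D (X μ * X ν) = X (insert m μ) * X ν - (-1) ^ μ.card • (X μ * X (insert m ν))) :
    twistingSum X (insert m s) = X s * X {m} - X {m} * X s - D (twistingSum X s) := by
  have hm : m ∉ s := fun h => lt_irrefl m (hlt m h)
  have hterm : ∀ μ ∈ s.powerset,
      twistingTerm X (insert m s) μ + twistingTerm X (insert m s) (insert m μ)
        = (if μ = s then X s * X {m} else 0) - (if μ = ∅ then X {m} * X s else 0)
          - D (twistingTerm X s μ) := by
    intro μ hμ
    rw [Finset.mem_powerset] at hμ
    rcases eq_or_ne μ ∅ with rfl | hμ0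
    · rw [twistingTerm_insert_insert X hlt hμ (Ne.symm hs)]
      simp [twistingTerm, Ne.symm hs, twistCoeff_empty]
    rcases eq_or_ne μ s with rfl | hμs
    · rw [twistingTerm_insert_of_subset X hlt hμ hμ0, twistCoeff_self, ← pow_add,
        Even.neg_one_pow ⟨_, rfl⟩, Finset.sdiff_self]
      simp [twistingTerm, hμ0]
    · have hltμ : ∀ b ∈ μ, b < m := fun b hb => hlt b (hμ hb)
      have hltν : ∀ b ∈ s \ μ, b < m := fun b hb => hlt b (Finset.sdiff_subset hb)
      have hν0 : s \ μ ≠ ∅ := fun h => hμs (hμ.antisymm (Finset.sdiff_eq_empty_iff_subset.1 h))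
      rw [twistingTerm_insert_of_subset X hlt hμ hμ0, twistingTerm_insert_insert X hlt hμ hμs,
        if_neg hμs, if_neg hμ0, twistingTerm, if_pos (show μ ≠ ∅ ∧ μ ≠ s from ⟨hμ0, hμs⟩),
        map_zsmul, hD μ (s \ μ) hltμ hltν hμ0 hν0]
      module
  rw [twistingSum, Finset.sum_powerset_insert hm, ← Finset.sum_add_distrib,
    Finset.sum_congr rfl hterm, Finset.sum_sub_distrib, Finset.sum_sub_distrib,
    Finset.sum_ite_eq', Finset.sum_ite_eq', twistingSum, map_sum]
  simp

theorem eq_neg_twistingSum_of_insert_max (X : Finset (Fin r) → A) (d : A → A)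
    (D : Fin r → A →+ A) (hsingle : ∀ i, d (X {i}) = 0)
    (hstep : ∀ m s, (∀ b ∈ s, b < m) → s ≠ ∅ →
      d (X (insert m s)) = X {m} * X s - X s * X {m} - D m (d (X s)))
    (hD : ∀ m (μ ν : Finset (Fin r)), (∀ b ∈ μ, b < m) → (∀ b ∈ ν, b < m) → μ ≠ ∅ → ν ≠ ∅ →
      D m (X μ * X ν) = X (insert m μ) * X ν - (-1) ^ μ.card • (X μ * X (insert m ν)))
    (π : Finset (Fin r)) (hπ : π ≠ ∅) : d (X π) = -twistingSum X π := by
  induction π using Finset.induction_on_max with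
  | empty => exact absurd rfl hπ
  | insert m s hlt ih =>
    rcases eq_or_ne s ∅ with rfl | hs
    · rw [insert_empty_eq, hsingle, twistingSum_singleton, neg_zero]
    · rw [hstep m s hlt hs, ih hs, twistingSum_insert_of_forall_lt X (D m) hlt hs (hD m), map_neg]
      abel

end Twisting

lemma e_xiExt {R A : Type} [CommRing R] [Ring A] [Module R A] {r : ℕ} (e : A →ₗ[R] A)
    (cup1 : A →ₗ[R] A →ₗ[R] A) (he_cup1 : ∀ a b : A, e (cup1 a b) = -cup1 (e a) (e b))
    (ξ : Fin r → A) (hξe : ∀ i, e (ξ i) = ξ i) (σ : Finset (Fin r)) :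
    e (xiExt (fun a b => cup1 a b) ξ σ)
      = if Even σ.card then -xiExt (fun a b => cup1 a b) ξ σ
        else xiExt (fun a b => cup1 a b) ξ σ := by
  rw [xiExt, ← Finset.length_sort (· ≤ ·), ← List.length_reverse]
  induction (σ.sort (· ≤ ·)).reverse with
  | nil => simp [xiList]
  | cons i t ih =>
    cases t with
    | nil => simp [xiList, hξe]
    | cons j u =>
      rw [xiList.eq_3 _ ξ i _ (List.cons_ne_nil j u), he_cup1, hξe, ih]
      simp only [List.length_cons, Nat.even_add_one]
      split_ifs <;> simp

theorem gugenheim_may_twisting_cochain_general (R A : Type) [CommRing R] [Ring A]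
    [Algebra R A] (r : ℕ) (dga : DGStr R A)
    -- `∪₁` is `R`-bilinear; we use the uncurried function:
    (cup1 : A →ₗ[R] A →ₗ[R] A)
    -- `∪₁` has degree `+1`:
    (he_cup1 : ∀ a b : A, dga.e (cup1 a b) = -cup1 (dga.e a) (dga.e b))
    -- `∪₁` is a homotopy for commutativity of the product
    -- (`pa`, `pb` are the parities of the homogeneous elements `a`, `b`):
    (hhomotopy : ∀ (a b : A) (pa pb : Bool),
      dga.e a = (if pa then -a else a) → dga.e b = (if pb then -b else b) →
      dga.d (cup1 a b)
        = a * b - (if pa && pb then (-1 : R) else 1) • (b * a)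
          - cup1 (dga.d a) b - (if pa then (-1 : R) else 1) • cup1 a (dga.d b))
    -- Hirsch formula: `∪₁` is a left derivation of the product:
    (hHirsch : ∀ (a b c : A) (pa pb : Bool),
      dga.e a = (if pa then -a else a) → dga.e b = (if pb then -b else b) →
      cup1 a (b * c)
        = (cup1 a b) * c
          + (if Bool.xor (pa && pb) pb then (-1 : R) else 1) • (b * cup1 a c))
    -- the `ξ'_i` are cocycles of degree 2 (hence even):
    (ξ : Fin r → A)
    (hξd : ∀ i, dga.d (ξ i) = 0) (hξe : ∀ i, dga.e (ξ i) = ξ i) :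
    ∀ π : Finset (Fin r), π ≠ ∅ →
      dga.d (xiExt (fun a b => cup1 a b) ξ π)
        = -∑ μ ∈ π.powerset,
            if μ ≠ ∅ ∧ μ ≠ π then
              (((-1 : R) ^ μ.card) * ((sgnShuffle (π \ μ) μ : ℤ) : R)) •
                (xiExt (fun a b => cup1 a b) ξ μ * xiExt (fun a b => cup1 a b) ξ (π \ μ))
            else 0 := by
  set X := xiExt (fun a b => cup1 a b) ξ
  have hpar (σ : Finset (Fin r)) : dga.e (X σ) = if decide (Even σ.card) then -X σ else X σ := by
    simpa using e_xiExt dga.e cup1 he_cup1 ξ hξe σ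
  have hXsing (i : Fin r) : X {i} = ξ i := xiExt_singleton _ ξ i
  have hXins {m : Fin r} {s : Finset (Fin r)} (hlt : ∀ b ∈ s, b < m) (hs : s ≠ ∅) :
      X (insert m s) = cup1 (ξ m) (X s) :=
    xiExt_insert_of_forall_lt _ ξ hlt hs
  have hξ_even (i : Fin r) : dga.e (ξ i) = if false then -ξ i else ξ i := hξe i
  have hstep (m : Fin r) (s : Finset (Fin r)) (hlt : ∀ b ∈ s, b < m) (hs : s ≠ ∅) :
      dga.d (X (insert m s)) = X {m} * X s - X s * X {m} - cup1 (ξ m) (dga.d (X s)) := by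
    rw [hXins hlt hs, hXsing, hhomotopy _ _ false _ (hξ_even m) (hpar s), hξd]
    simp
  have hcup (m : Fin r) (μ ν : Finset (Fin r)) (hμ : ∀ b ∈ μ, b < m) (hν : ∀ b ∈ ν, b < m)
      (hμ0 : μ ≠ ∅) (hν0 : ν ≠ ∅) :
      cup1 (ξ m) (X μ * X ν) = X (insert m μ) * X ν - (-1) ^ μ.card • (X μ * X (insert m ν)) := by
    rw [hHirsch _ _ _ false _ (hξ_even m) (hpar μ), hXins hμ hμ0, hXins hν hν0]
    rcases Nat.even_or_odd μ.card with h | h <;> simp [h, h.neg_one_pow, sub_eq_add_neg]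
  intro π hπ
  rw [eq_neg_twistingSum_of_insert_max X dga.d (fun i => (cup1 (ξ i)).toAddMonoidHom)
    (fun i => by rw [hXsing, hξd]) hstep hcup π hπ, twistingSum]
  congr 1
  refine Finset.sum_congr rfl fun μ _ => ?_
  simp only [twistingTerm, twistCoeff, ← Int.cast_smul_eq_zsmul R]
  push_cast
  rfl

/-- the Gugenheim–May recursion produces a twisting cochain. -/
theorem gugenheim_may_twisting_cochain (R A : Type) [CommRing R] [Ring A]
    [Algebra R A] (r : ℕ) (dga : DGStr R A)
    -- `A` is a dg algebra with sign operator `e`: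
    (hLeib : ∀ a b : A, dga.d (a * b) = dga.d a * b + dga.e a * dga.d b)
    (he_mul : ∀ a b : A, dga.e (a * b) = dga.e a * dga.e b)
    (he_one : dga.e 1 = 1)
    -- `∪₁` is `R`-bilinear; we use the uncurried function:
    (cup1 : A →ₗ[R] A →ₗ[R] A)
    -- `∪₁` has degree `+1`:
    (he_cup1 : ∀ a b : A, dga.e (cup1 a b) = -cup1 (dga.e a) (dga.e b))
    -- `α ∪₁ β = 0` if `α` or `β` has degree zero (`G0` is the degree-0 part):
    (G0 : Submodule R A)
    (hcup1_zero : ∀ a b : A, a ∈ G0 ∨ b ∈ G0 → cup1 a b = 0)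
    -- `∪₁` is a homotopy for commutativity of the product
    -- (`pa`, `pb` are the parities of the homogeneous elements `a`, `b`):
    (hhomotopy : ∀ (a b : A) (pa pb : Bool),
      dga.e a = (if pa then -a else a) → dga.e b = (if pb then -b else b) →
      dga.d (cup1 a b)
        = a * b - (if pa && pb then (-1 : R) else 1) • (b * a)
          - cup1 (dga.d a) b - (if pa then (-1 : R) else 1) • cup1 a (dga.d b))
    -- Hirsch formula: `∪₁` is a left derivation of the product:
    (hHirsch : ∀ (a b c : A) (pa pb : Bool),
      dga.e a = (if pa then -a else a) → dga.e b = (if pb then -b else b) →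
      cup1 a (b * c)
        = (cup1 a b) * c
          + (if Bool.xor (pa && pb) pb then (-1 : R) else 1) • (b * cup1 a c))
    -- the `ξ'_i` are cocycles of degree 2 (hence even):
    (ξ : Fin r → A)
    (hξd : ∀ i, dga.d (ξ i) = 0) (hξe : ∀ i, dga.e (ξ i) = ξ i) :
    ∀ π : Finset (Fin r), π ≠ ∅ →
      dga.d (xiExt (fun a b => cup1 a b) ξ π)
        = -∑ μ ∈ π.powerset,
            if μ ≠ ∅ ∧ μ ≠ π then
              (((-1 : R) ^ μ.card) * ((sgnShuffle (π \ μ) μ : ℤ) : R)) •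
                (xiExt (fun a b => cup1 a b) ξ μ * xiExt (fun a b => cup1 a b) ξ (π \ μ))
            else 0 :=
  gugenheim_may_twisting_cochain_general R A r dga cup1 he_cup1 hhomotopy hHirsch ξ hξd hξe

end
end

section
/- The cross-one product vanishes on the image of the shuffle map: for all simplicial sets X, Y, cochains α ∈ C*(X), β ∈ C*(Y), and chains a ∈ C(X), b ∈ C(Y), one has (α ×₁ β)(∇_{XY}(a ⊗ b)) = 0; equivalently ST_{XY} ∘ ∇_{XY} = 0 on normalised chains. -/
/-!
STATEMENT 14.  The cross-one product vanishes on the image of the shuffle map: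
for all simplicial sets `X`, `Y`, normalised cochains `α ∈ C^p(X)`,
`β ∈ C^q(Y)` and chains `a ∈ C(X)`, `b ∈ C(Y)`,
`(α ×₁ β)(∇(a ⊗ b)) = 0`; equivalently `ST ∘ ∇ = 0` on normalised chains.

Here `α ×₁ β = (-1)^{p+q} (α ⊗ β) ∘ ST` with the Steenrod map
`ST(x,y) = Σ_{0≤i<j≤n} (-1)^{i+j+ij} ∂_0^{i-1}∂_{j+1}^n x ⊗ ∂_{i+1}^{j-1} y`.
-/

open TensorProduct

noncomputable section

/-- A simplicial set, encoded with ℕ-indexed face maps `d i : X_{n+1} → X_n`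
and degeneracy maps `s i : X_n → X_{n+1}` (only indices in the valid range
are constrained, by the usual simplicial identities). -/
structure SST : Type 1 where
  X : ℕ → Type
  d : ℕ → {n : ℕ} → X (n+1) → X n
  s : ℕ → {n : ℕ} → X n → X (n+1)
  h_dd : ∀ {n : ℕ} (i j : ℕ), i < j → j ≤ n + 2 → ∀ x : X (n+2),
    d i (d j x) = d (j-1) (d i x)
  h_ds_lt : ∀ {n : ℕ} (i j : ℕ), i < j → j ≤ n + 1 → ∀ x : X (n+1),
    d i (s j x) = s (j-1) (d i x)
  h_ds_eq : ∀ {n : ℕ} (j : ℕ), j ≤ n → ∀ x : X n, d j (s j x) = x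
  h_ds_succ : ∀ {n : ℕ} (j : ℕ), j ≤ n → ∀ x : X n, d (j+1) (s j x) = x
  h_ds_gt : ∀ {n : ℕ} (i j : ℕ), j + 1 < i → i ≤ n + 2 → ∀ x : X (n+1),
    d i (s j x) = s j (d (i-1) x)
  h_ss : ∀ {n : ℕ} (i j : ℕ), i ≤ j → j ≤ n → ∀ x : X n,
    s i (s j x) = s (j+1) (s i x)

namespace SST

/-- Product of simplicial sets. -/
def prod (S T : SST) : SST where
  X n := S.X n × T.X n
  d := fun i {n} x => (S.d i x.1, T.d i x.2)
  s := fun i {n} x => (S.s i x.1, T.s i x.2)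
  h_dd := fun i j h1 h2 x => Prod.ext (S.h_dd i j h1 h2 x.1) (T.h_dd i j h1 h2 x.2)
  h_ds_lt := fun i j h1 h2 x => Prod.ext (S.h_ds_lt i j h1 h2 x.1) (T.h_ds_lt i j h1 h2 x.2)
  h_ds_eq := fun j h x => Prod.ext (S.h_ds_eq j h x.1) (T.h_ds_eq j h x.2)
  h_ds_succ := fun j h x => Prod.ext (S.h_ds_succ j h x.1) (T.h_ds_succ j h x.2)
  h_ds_gt := fun i j h1 h2 x => Prod.ext (S.h_ds_gt i j h1 h2 x.1) (T.h_ds_gt i j h1 h2 x.2)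
  h_ss := fun i j h1 h2 x => Prod.ext (S.h_ss i j h1 h2 x.1) (T.h_ss i j h1 h2 x.2)

/-- The set of all simplices of `S`. -/
abbrev Tot (S : SST) : Type := Σ n : ℕ, S.X n

/-- Degree cast. -/
def castX (S : SST) {a b : ℕ} (h : a = b) (x : S.X a) : S.X b := h ▸ x

/-- Iterated last face map `(∂̃)^k : X_{n+k} → X_n`. -/
def dTop (S : SST) : (k : ℕ) → {n : ℕ} → S.X (n + k) → S.X n
  | 0, _, x => x
  | (k+1), n, x => S.dTop k (S.d (n + k + 1) x)

/-- Iterated zeroth face map `(∂_0)^k : X_{n+k} → X_n`. -/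
def d0 (S : SST) : (k : ℕ) → {n : ℕ} → S.X (n + k) → S.X n
  | 0, _, x => x
  | (k+1), _, x => S.d0 k (S.d 0 x)

/-- `∂_a^{a+k-1} = ∂_a ∘ ∂_{a+1} ∘ ⋯ ∘ ∂_{a+k-1} : X_{n+k} → X_n`. -/
def dMid (S : SST) (a : ℕ) : (k : ℕ) → {n : ℕ} → S.X (n + k) → S.X n
  | 0, _, x => x
  | (k+1), n, x => S.dMid a k (S.d (a + k) x)

/-- Iterated degeneracies `s_{i_q} ∘ ⋯ ∘ s_{i_1}` for a descending list. -/
def sIter (S : SST) : (l : List ℕ) → {n : ℕ} → S.X n → S.X (n + l.length)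
  | [], _, x => x
  | (i :: t), _, x => S.s i (S.sIter t x)

/-- `s_ν : X_n → X_{n + |ν|}` for a finite set `ν ⊆ ℕ` of degeneracy indices
(applied in the usual order `s_ν = s_{ν_q} ∘ ⋯ ∘ s_{ν_1}`, `ν_1 < ⋯ < ν_q`). -/
def sSet (S : SST) (ν : Finset ℕ) {n : ℕ} (x : S.X n) : S.X (n + ν.card) :=
  S.castX (by simp) (S.sIter ((ν.sort (· ≤ ·)).reverse) x)

end SST

variable (R : Type) [CommRing R]

/-- The (unnormalised) chain module on a simplicial set. -/
abbrev Ch (S : SST) : Type := S.Tot →₀ R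

/-- The generator corresponding to a simplex. -/
def gsing (S : SST) {n : ℕ} (x : S.X n) : Ch R S := Finsupp.single ⟨n, x⟩ 1

/-- The submodule of degenerate chains (whose quotient is the normalised
chain complex). -/
def DegSub (S : SST) : Submodule R (Ch R S) :=
  Submodule.span R {c | ∃ (n j : ℕ) (x : S.X n), j ≤ n ∧ c = gsing R S (S.s j x)}

/-- The simplicial boundary `∂ = Σ (-1)^k ∂_k`. -/
def bd (S : SST) : Ch R S →ₗ[R] Ch R S :=
  (Finsupp.lift (Ch R S) R S.Tot) fun z =>
    match z with
    | ⟨0, _⟩ => 0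
    | ⟨n+1, x⟩ => ∑ k ∈ Finset.range (n+2), ((-1 : R)^k) • gsing R S (S.d k x)

/-- The parity operator `(-1)^deg` on chains. -/
def parOp (S : SST) : Ch R S →ₗ[R] Ch R S :=
  (Finsupp.lift (Ch R S) R S.Tot) fun z => ((-1 : R)^z.1) • Finsupp.single z 1

/-- The span of the simplices of degree `n`. -/
def GrSub (S : SST) (n : ℕ) : Submodule R (Ch R S) :=
  Submodule.span R {c | ∃ x : S.X n, c = gsing R S x}

/-- The sign `sgn(μ, ν)` of a shuffle given by a partition `(μ, ν)`. -/
def shSign (μ ν : Finset ℕ) : ℤ := (-1) ^ (∑ a ∈ μ, (ν.filter (fun b => b < a)).card)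

/-- The Eilenberg–Mac Lane shuffle map on a pair of simplices:
`∇(x ⊗ y) = Σ_{(μ,ν)⊢(m,n)} sgn(μ,ν) (s_ν x, s_μ y)`. -/
def shufAux (S T : SST) (p : S.Tot) (q : T.Tot) : Ch R (S.prod T) :=
  ∑ ν ∈ (Finset.range (p.1 + q.1)).powerset,
    if h : ν ⊆ Finset.range (p.1 + q.1) ∧ ν.card = q.1 then
      ((shSign ((Finset.range (p.1 + q.1)) \ ν) ν : ℤ) : R) •
        Finsupp.single
          ⟨p.1 + q.1,
            (S.castX (by rw [h.2]) (S.sSet ν p.2),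
             T.castX (by rw [Finset.card_sdiff, Finset.inter_eq_left.mpr h.1, Finset.card_range, h.2]; omega)
               (T.sSet ((Finset.range (p.1 + q.1)) \ ν) q.2))⟩ 1
    else 0

/-- The shuffle map as a bilinear map. -/
def shuf (S T : SST) : Ch R S →ₗ[R] Ch R T →ₗ[R] Ch R (S.prod T) :=
  (Finsupp.lift (Ch R T →ₗ[R] Ch R (S.prod T)) R S.Tot) fun p =>
    (Finsupp.lift (Ch R (S.prod T)) R T.Tot) fun q => shufAux R S T p q

/-- The shuffle map `∇ : C(X) ⊗ C(Y) → C(X × Y)`. -/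
def shufT (S T : SST) : Ch R S ⊗[R] Ch R T →ₗ[R] Ch R (S.prod T) :=
  TensorProduct.lift (shuf R S T)

/-- The Alexander–Whitney map
`AW(x, y) = Σ_i (∂̃)^{n-i} x ⊗ (∂_0)^i y : C(X × Y) → C(X) ⊗ C(Y)`. -/
def AWmap (S T : SST) : Ch R (S.prod T) →ₗ[R] Ch R S ⊗[R] Ch R T :=
  (Finsupp.lift (Ch R S ⊗[R] Ch R T) R (S.prod T).Tot) fun p =>
    ∑ i ∈ (Finset.range (p.1 + 1)).attach,
      (Finsupp.single
          (⟨i.1, S.dTop (p.1 - i.1)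
            (S.castX (by have := Finset.mem_range.mp i.2; omega) p.2.1)⟩ : S.Tot) (1 : R))
        ⊗ₜ[R]
      (Finsupp.single
          (⟨p.1 - i.1, T.d0 i.1
            (T.castX (by have := Finset.mem_range.mp i.2; omega) p.2.2)⟩ : T.Tot) (1 : R))

/-- The chain map induced by the swap `τ : X × Y → Y × X`. -/
def swapMap (S T : SST) : Ch R (S.prod T) →ₗ[R] Ch R (T.prod S) :=
  (Finsupp.lift (Ch R (T.prod S)) R (S.prod T).Tot) fun p =>
    Finsupp.single ⟨p.1, (p.2.2, p.2.1)⟩ 1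

/-- The graded transposition `T(a ⊗ b) = (-1)^{|a||b|} b ⊗ a`. -/
def twistMap (S T : SST) : Ch R S ⊗[R] Ch R T →ₗ[R] Ch R T ⊗[R] Ch R S :=
  TensorProduct.lift <|
    (Finsupp.lift (Ch R T →ₗ[R] Ch R T ⊗[R] Ch R S) R S.Tot) fun p =>
      (Finsupp.lift (Ch R T ⊗[R] Ch R S) R T.Tot) fun q =>
        ((-1 : R) ^ (p.1 * q.1)) • (Finsupp.single q 1 ⊗ₜ[R] Finsupp.single p 1)

/-- The chain map induced by the diagonal. -/
def diagMap (S : SST) : Ch R S →ₗ[R] Ch R (S.prod S) :=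
  (Finsupp.lift (Ch R (S.prod S)) R S.Tot) fun p => Finsupp.single ⟨p.1, (p.2, p.2)⟩ 1

/-- A simplex is nondegenerate if it is not of the form `s_j y`. -/
def NondegT (S : SST) : S.Tot → Prop
  | ⟨0, _⟩ => True
  | ⟨n+1, x⟩ => ∀ j ≤ n, ∀ y : S.X n, x ≠ S.s j y


/-- The cross-one product `α ×₁ β = (-1)^{p+q} (α ⊗ β) ∘ ST` on `C(X × Y)`. -/
def cross1Ch (S T : SST) (α : Ch R S →ₗ[R] R) (β : Ch R T →ₗ[R] R) (p q : ℕ) :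
    Ch R (S.prod T) →ₗ[R] R :=
  (Finsupp.lift R R (S.prod T).Tot) fun z =>
    ((-1 : R) ^ (p + q)) *
      ∑ i ∈ Finset.range (z.1 + 1), ∑ j ∈ Finset.range (z.1 + 1),
        if h : i < j ∧ j ≤ z.1 then
          ((-1 : R) ^ (i + j + i * j))
            * α (Finsupp.single
                (⟨j - i, S.d0 i (S.castX (by omega)
                    ((S.dTop (z.1 - j) (S.castX (by omega) z.2.1)) : S.X j))⟩ : S.Tot) 1)
            * β (Finsupp.single
                (⟨z.1 - (j - 1 - i),
                  T.dMid (i + 1) (j - 1 - i) (T.castX (by omega) z.2.2)⟩ : T.Tot) 1)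
        else 0

/-- `α` is a cochain of cohomological degree `p`. -/
def IsDeg (S : SST) (α : Ch R S →ₗ[R] R) (p : ℕ) : Prop :=
  ∀ (n : ℕ) (x : S.X n), n ≠ p → α (gsing R S x) = 0

/-- `α` is normalised. -/
def IsNorm (S : SST) (α : Ch R S →ₗ[R] R) : Prop :=
  ∀ (n j : ℕ) (x : S.X n), j ≤ n → α (gsing R S (S.s j x)) = 0

/-!
A simplex of the shuffle `∇(x ⊗ y)` is `(s_ν x, s_μ y)` with `μ ⊔ ν = {0, …, m+n-1}`.
The `(i, j)` term of `ST` pairs `∂_0^i ∂̃^{m+n-j} s_ν x` with `∂_{i+1} ⋯ ∂_{j-1} s_μ y`.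
If `ν` meets `[i, j)`, the corresponding degeneracy survives every face of the first
factor; otherwise `[i, j) ⊆ μ`, and the `j - i - 1` middle faces cancel at most
`j - i - 1` of the `j - i` degeneracies `s_i, …, s_{j-1}` of the second factor.
Either way one factor is degenerate, and normalised cochains vanish on it.
-/

namespace SST

variable (S : SST)

/-- Simplicial operators on the set of all simplices, where no degree casts are needed.
On vertices `dTot i` is the identity (a junk value). -/
def dTot (i : ℕ) : S.Tot → S.Tot
  | ⟨0, x⟩ => ⟨0, x⟩
  | ⟨n + 1, x⟩ => ⟨n, S.d i x⟩

def sTot (i : ℕ) (t : S.Tot) : S.Tot := ⟨t.1 + 1, S.s i t.2⟩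

def dTopTot (t : S.Tot) : S.Tot := S.dTot t.1 t

def dMidTot (a : ℕ) : ℕ → S.Tot → S.Tot
  | 0, t => t
  | k + 1, t => dMidTot a k (S.dTot (a + k) t)

def sSetTot (ν : Finset ℕ) (t : S.Tot) : S.Tot :=
  ((ν.sort (· ≤ ·)).reverse).foldr S.sTot t

def IsDegenerate (t : S.Tot) : Prop := ∃ k u, k ≤ u.1 ∧ t = S.sTot k u

variable {S}

@[simp] lemma dTot_fst (i : ℕ) (t : S.Tot) : (S.dTot i t).1 = t.1 - 1 := by
  obtain ⟨_ | n, x⟩ := t <;> rfl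

@[simp] lemma sTot_fst (i : ℕ) (t : S.Tot) : (S.sTot i t).1 = t.1 + 1 := rfl

@[simp] lemma dTopTot_fst (t : S.Tot) : (S.dTopTot t).1 = t.1 - 1 := dTot_fst _ _

lemma dTot_iterate_fst (i r : ℕ) (t : S.Tot) : ((S.dTot i)^[r] t).1 = t.1 - r := by
  induction r generalizing t with
  | zero => rfl
  | succ r ih => rw [Function.iterate_succ_apply, ih, dTot_fst]; omega

lemma dTopTot_iterate_fst (r : ℕ) (t : S.Tot) : (S.dTopTot^[r] t).1 = t.1 - r := by
  induction r generalizing t with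
  | zero => rfl
  | succ r ih => rw [Function.iterate_succ_apply, ih, dTopTot_fst]; omega

lemma dMidTot_fst (a r : ℕ) (t : S.Tot) : (S.dMidTot a r t).1 = t.1 - r := by
  induction r generalizing t with
  | zero => rfl
  | succ r ih => rw [dMidTot, ih, dTot_fst]; omega

lemma sigma_mk_castX {a b : ℕ} (h : a = b) (x : S.X a) :
    (⟨b, S.castX h x⟩ : S.Tot) = ⟨a, x⟩ := by
  subst h; rfl

lemma sigma_mk_dTop (k n : ℕ) (x : S.X (n + k)) :
    (⟨n, S.dTop k x⟩ : S.Tot) = S.dTopTot^[k] ⟨n + k, x⟩ := by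
  induction k with
  | zero => rfl
  | succ k ih => exact ih (S.d (n + k + 1) x)

lemma sigma_mk_d0 (k n : ℕ) (x : S.X (n + k)) :
    (⟨n, S.d0 k x⟩ : S.Tot) = (S.dTot 0)^[k] ⟨n + k, x⟩ := by
  induction k with
  | zero => rfl
  | succ k ih => exact ih (S.d 0 x)

lemma sigma_mk_dMid (a k n : ℕ) (x : S.X (n + k)) :
    (⟨n, S.dMid a k x⟩ : S.Tot) = S.dMidTot a k ⟨n + k, x⟩ := by
  induction k with
  | zero => rfl
  | succ k ih => exact ih (S.d (a + k) x)

lemma sigma_mk_sIter (l : List ℕ) {n : ℕ} (x : S.X n) :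
    (⟨n + l.length, S.sIter l x⟩ : S.Tot) = l.foldr S.sTot ⟨n, x⟩ := by
  induction l with
  | nil => rfl
  | cons a l ih => exact congrArg (S.sTot a) ih

lemma sigma_mk_sSet (ν : Finset ℕ) {n : ℕ} (x : S.X n) :
    (⟨n + ν.card, S.sSet ν x⟩ : S.Tot) = S.sSetTot ν ⟨n, x⟩ := by
  rw [sSet, sigma_mk_castX, sigma_mk_sIter, sSetTot]

lemma dTot_sTot_of_lt {a k : ℕ} {t : S.Tot} (hak : a < k) (hk : k ≤ t.1) :
    S.dTot a (S.sTot k t) = S.sTot (k - 1) (S.dTot a t) := by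
  obtain ⟨_ | n, x⟩ := t
  · exact absurd hk (by simp only; omega)
  · exact congrArg (Sigma.mk (n + 1)) (S.h_ds_lt a k hak hk x)

lemma dTot_sTot_self {k : ℕ} {t : S.Tot} (hk : k ≤ t.1) : S.dTot k (S.sTot k t) = t :=
  congrArg (Sigma.mk t.1) (S.h_ds_eq k hk t.2)

lemma dTot_sTot_of_gt {a k : ℕ} {t : S.Tot} (hka : k + 1 < a) (ha : a ≤ t.1 + 1) :
    S.dTot a (S.sTot k t) = S.sTot k (S.dTot (a - 1) t) := by
  obtain ⟨_ | n, x⟩ := t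
  · exact absurd ha (by simp only; omega)
  · exact congrArg (Sigma.mk (n + 1)) (S.h_ds_gt a k hka ha x)

lemma sTot_sTot_of_lt {a k : ℕ} {t : S.Tot} (hka : k < a) (ha : a ≤ t.1 + 1) :
    S.sTot a (S.sTot k t) = S.sTot k (S.sTot (a - 1) t) := by
  have h := S.h_ss k (a - 1) (by omega) (by omega) t.2
  rw [Nat.sub_add_cancel (by omega)] at h
  exact congrArg (Sigma.mk (t.1 + 2)) h.symm

lemma dTot_zero_iterate_sTot {i k : ℕ} {t : S.Tot} (hik : i ≤ k) (hk : k ≤ t.1) :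
    (S.dTot 0)^[i] (S.sTot k t) = S.sTot (k - i) ((S.dTot 0)^[i] t) := by
  induction i generalizing k t with
  | zero => rfl
  | succ i ih =>
    rw [Function.iterate_succ_apply, Function.iterate_succ_apply, dTot_sTot_of_lt (by omega) hk,
      ih (by omega) (by rw [dTot_fst]; omega), Nat.sub_sub, Nat.add_comm 1 i]

lemma dTopTot_iterate_sTot {r k : ℕ} {t : S.Tot} (hkr : k + r ≤ t.1) :
    S.dTopTot^[r] (S.sTot k t) = S.sTot k (S.dTopTot^[r] t) := by
  induction r generalizing t with
  | zero => rfl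
  | succ r ih =>
    have hcomm : S.dTopTot (S.sTot k t) = S.sTot k (S.dTopTot t) :=
      dTot_sTot_of_gt (by simp only [sTot_fst]; omega) le_rfl
    rw [Function.iterate_succ_apply, Function.iterate_succ_apply, hcomm,
      ih (by rw [dTopTot_fst]; omega)]

lemma dMidTot_sTot_of_add_le {a r k : ℕ} {t : S.Tot} (hark : a + r ≤ k) (hk : k ≤ t.1) :
    S.dMidTot a r (S.sTot k t) = S.sTot (k - r) (S.dMidTot a r t) := by
  induction r generalizing k t with
  | zero => rfl
  | succ r ih =>
    rw [dMidTot, dMidTot, dTot_sTot_of_lt (by omega) hk,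
      ih (by omega) (by rw [dTot_fst]; omega), Nat.sub_sub, Nat.add_comm 1 r]

@[simp] lemma sSetTot_fst (ν : Finset ℕ) (t : S.Tot) : (S.sSetTot ν t).1 = t.1 + ν.card := by
  rw [sSetTot, ← Finset.length_sort (· ≤ ·), ← List.length_reverse]
  induction (ν.sort (· ≤ ·)).reverse with
  | nil => rfl
  | cons a l ih => simp only [List.foldr_cons, sTot_fst, ih, List.length_cons]; omega

lemma sSetTot_insert_of_forall_lt {a : ℕ} {ν : Finset ℕ} (ha : ∀ b ∈ ν, b < a) (t : S.Tot) :
    S.sSetTot (insert a ν) t = S.sTot a (S.sSetTot ν t) := by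
  have hsort : (insert a ν).sort (· ≤ ·) = ν.sort (· ≤ ·) ++ [a] := by
    have hnodup : (ν.sort (· ≤ ·) ++ [a]).Nodup :=
      List.nodup_append.mpr ⟨ν.sort_nodup _, List.nodup_singleton a,
        fun b hb c hc => by
          rw [List.mem_singleton.mp hc]
          exact (ha b ((ν.mem_sort _).mp hb)).ne⟩
    have hset : (ν.sort (· ≤ ·) ++ [a]).toFinset = insert a ν := by
      ext b; simp
    rw [← hset, List.toFinset_sort _ hnodup, List.pairwise_append]
    exact ⟨ν.pairwise_sort _, List.pairwise_singleton _ a,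
      fun b hb c hc => by
        rw [List.mem_singleton.mp hc]
        exact (ha b ((ν.mem_sort _).mp hb)).le⟩
  simp only [sSetTot, hsort, List.reverse_append, List.reverse_singleton, List.singleton_append,
    List.foldr_cons]

lemma exists_sSetTot_eq_sTot {ν : Finset ℕ} {t : S.Tot} (hν : ∀ b ∈ ν, b < t.1 + ν.card)
    {k : ℕ} (hk : k ∈ ν) : ∃ u, S.sSetTot ν t = S.sTot k u := by
  induction ν using Finset.induction_on_max with
  | empty => simp at hk
  | insert a ν ha ih =>
    have haν : a ∉ ν := fun h => lt_irrefl a (ha a h)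
    rw [sSetTot_insert_of_forall_lt ha]
    rcases Finset.mem_insert.mp hk with rfl | hkν
    · exact ⟨_, rfl⟩
    · have hbound := hν a (Finset.mem_insert_self a ν)
      rw [Finset.card_insert_of_notMem haν] at hbound
      obtain ⟨u, hu⟩ := ih (fun b hb => by have := ha b hb; omega) hkν
      have hu1 : u.1 + 1 = t.1 + ν.card := by simpa using (congrArg Sigma.fst hu).symm
      exact ⟨_, by rw [hu, sTot_sTot_of_lt (ha k hkν) (by omega)]⟩

lemma isDegenerate_dTot_zero_iterate_dTopTot_iterate_sSetTot {ν : Finset ℕ} {t : S.Tot}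
    (hν : ∀ b ∈ ν, b < t.1 + ν.card) {i k r : ℕ} (hk : k ∈ ν) (hik : i ≤ k)
    (hkr : k + r < t.1 + ν.card) :
    S.IsDegenerate ((S.dTot 0)^[i] (S.dTopTot^[r] (S.sSetTot ν t))) := by
  obtain ⟨u, hu⟩ := exists_sSetTot_eq_sTot hν hk
  have hu1 : u.1 + 1 = t.1 + ν.card := by simpa using (congrArg Sigma.fst hu).symm
  rw [hu, dTopTot_iterate_sTot (by omega),
    dTot_zero_iterate_sTot hik (by rw [dTopTot_iterate_fst]; omega)]
  exact ⟨_, _, by rw [dTot_iterate_fst, dTopTot_iterate_fst]; omega, rfl⟩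

lemma isDegenerate_dMidTot_sSetTot {ν : Finset ℕ} {t : S.Tot}
    (hν : ∀ b ∈ ν, b < t.1 + ν.card) {i r : ℕ} (hsub : ∀ k, i ≤ k → k ≤ i + r → k ∈ ν) :
    S.IsDegenerate (S.dMidTot (i + 1) r (S.sSetTot ν t)) := by
  induction ν using Finset.induction_on_max generalizing r with
  | empty => simpa using hsub i le_rfl (by omega)
  | insert a ν ha ih =>
    have haν : a ∉ ν := fun h => lt_irrefl a (ha a h)
    have hbound := hν a (Finset.mem_insert_self a ν)
    rw [Finset.card_insert_of_notMem haν] at hbound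
    have hira : i + r ≤ a := by
      rcases Finset.mem_insert.mp (hsub (i + r) (by omega) le_rfl) with h | h
      · exact h.le
      · exact (ha _ h).le
    rw [sSetTot_insert_of_forall_lt ha]
    rcases hira.lt_or_eq with hlt | rfl
    · rw [dMidTot_sTot_of_add_le (by omega) (by rw [sSetTot_fst]; omega)]
      exact ⟨_, _, by rw [dMidTot_fst, sSetTot_fst]; omega, rfl⟩
    · cases r with
      | zero => exact ⟨_, _, by rw [sSetTot_fst]; omega, rfl⟩
      | succ r =>
        rw [dMidTot, show i + 1 + r = i + (r + 1) by omega, dTot_sTot_self (by rw [sSetTot_fst]; omega)]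
        refine ih (fun b hb => by have := ha b hb; omega) fun k hik hkr => ?_
        exact (Finset.mem_insert.mp (hsub k hik (by omega))).resolve_left (by omega)

lemma shuffle_factor_isDegenerate {T : SST} {t : S.Tot} {u : T.Tot} {ν : Finset ℕ}
    (hν : ν ⊆ Finset.range (t.1 + u.1)) (hνc : ν.card = u.1) {i j : ℕ} (hij : i < j)
    (hj : j ≤ t.1 + u.1) :
    S.IsDegenerate ((S.dTot 0)^[i] (S.dTopTot^[t.1 + u.1 - j] (S.sSetTot ν t))) ∨
      T.IsDegenerate
        (T.dMidTot (i + 1) (j - 1 - i) (T.sSetTot (Finset.range (t.1 + u.1) \ ν) u)) := by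
  by_cases hmeet : ∃ k ∈ ν, i ≤ k ∧ k < j
  · obtain ⟨k, hk, hik, hkj⟩ := hmeet
    refine .inl (isDegenerate_dTot_zero_iterate_dTopTot_iterate_sSetTot
      (fun b hb => ?_) hk hik (by omega))
    have := Finset.mem_range.mp (hν hb)
    omega
  · push Not at hmeet
    have hμc : (Finset.range (t.1 + u.1) \ ν).card = t.1 := by
      rw [Finset.card_sdiff_of_subset hν, Finset.card_range]; omega
    refine .inr (isDegenerate_dMidTot_sSetTot (fun b hb => ?_) fun k hik hkj => ?_)
    · have := Finset.mem_range.mp (Finset.mem_sdiff.mp hb).1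
      omega
    · exact Finset.mem_sdiff.mpr
        ⟨Finset.mem_range.mpr (by omega), fun hkν => (hmeet k hkν hik).not_gt (by omega)⟩

end SST

section

variable {R}

lemma IsNorm.apply_single_eq_zero {S : SST} {α : Ch R S →ₗ[R] R} (hα : IsNorm R S α)
    {t : S.Tot} (ht : S.IsDegenerate t) : α (Finsupp.single t 1) = 0 := by
  obtain ⟨k, u, hk, rfl⟩ := ht
  exact hα u.1 k u.2 hk

variable {S T : SST} {α : Ch R S →ₗ[R] R} {β : Ch R T →ₗ[R] R}

lemma cross1Ch_single_eq_zero (p q : ℕ) (hα : IsNorm R S α) (hβ : IsNorm R T β)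
    (z : (S.prod T).Tot)
    (hz : ∀ i j, i < j → j ≤ z.1 →
      S.IsDegenerate ((S.dTot 0)^[i] (S.dTopTot^[z.1 - j] ⟨z.1, z.2.1⟩)) ∨
        T.IsDegenerate (T.dMidTot (i + 1) (j - 1 - i) ⟨z.1, z.2.2⟩)) :
    cross1Ch R S T α β p q (Finsupp.single z 1) = 0 := by
  rw [cross1Ch, Finsupp.lift_apply, Finsupp.sum_single_index (by simp), one_smul]
  refine mul_eq_zero_of_right _
    (Finset.sum_eq_zero fun i _ => Finset.sum_eq_zero fun j _ => ?_)
  split_ifs with hij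
  · rw [SST.sigma_mk_d0, SST.sigma_mk_castX, SST.sigma_mk_dTop, SST.sigma_mk_castX,
      SST.sigma_mk_dMid, SST.sigma_mk_castX]
    rcases hz i j hij.1 hij.2 with h | h
    · rw [hα.apply_single_eq_zero h, mul_zero, zero_mul]
    · rw [hβ.apply_single_eq_zero h, mul_zero]
  · rfl

lemma cross1Ch_shufAux_eq_zero (p q : ℕ) (hα : IsNorm R S α) (hβ : IsNorm R T β)
    (x : S.Tot) (y : T.Tot) : cross1Ch R S T α β p q (shufAux R S T x y) = 0 := by
  rw [shufAux, map_sum]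
  refine Finset.sum_eq_zero fun ν _ => ?_
  split_ifs with hν
  · rw [map_smul, cross1Ch_single_eq_zero p q hα hβ _ fun i j hij hj => ?_, smul_zero]
    dsimp only
    rw [SST.sigma_mk_castX, SST.sigma_mk_sSet, SST.sigma_mk_castX, SST.sigma_mk_sSet]
    exact SST.shuffle_factor_isDegenerate hν.1 hν.2 hij hj
  · exact map_zero _

end

theorem cross_one_vanishes_on_shuffles (S T : SST)
    (α : Ch R S →ₗ[R] R) (β : Ch R T →ₗ[R] R) (p q : ℕ)
    (hαn : IsNorm R S α) (hβn : IsNorm R T β) :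
    ∀ (a : Ch R S) (b : Ch R T),
      cross1Ch R S T α β p q (shufT R S T (a ⊗ₜ[R] b)) = 0 := by
  have h : (shuf R S T).compr₂ (cross1Ch R S T α β p q) = 0 := by
    refine Finsupp.lhom_ext fun x r => Finsupp.lhom_ext fun y r' => ?_
    simp [shuf, Finsupp.lift_apply, cross1Ch_shufAux_eq_zero p q hαn hβn]
  intro a b
  simpa [shufT] using LinearMap.congr_fun₂ h a b

end
end
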